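/- arXiv:2305.05449 — 5 statements merged into one kernel-verified Lean document; each statement's English description precedes it below -/
import Mathlib

section
/- Let H₁, H₂, H₃ be complex Hilbert spaces and let d₁ : H₁ → H₂, d₂ : H₂ → H₃ be densely defined closed unbounded operators satisfying the complex property (for every x in D(d₁), d₁x ∈ D(d₂) and d₂(d₁x) = 0). Then the Hodge Laplace operator Δ on H₂, with domain D(Δ) = {x ∈ D(d₂) ∩ D(d₁†) : d₂x ∈ D(d₂†) and d₁†x ∈ D(d₁)} and Δx = d₂†(d₂x) + d₁(d₁†x), is a non-negative self-adjoint operator: Δ is densely defined, Δ† = Δ, and ⟨Δx, x⟩ ≥ 0 for all x ∈ D(Δ). -/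
open scoped ComplexInnerProductSpace ComplexOrder

/-!
`Δ` is the operator of the nonnegative Hermitian form `⟪d₂ x, d₂ y⟫ + ⟪d₁† x, d₁† y⟫` on
`D(d₂) ∩ D(d₁†)`, so it is symmetric and nonnegative. Projecting `(f, 0, 0)` onto the closed joint
graph of `d₂` and `d₁†` gives a weak solution `u` of `u + Δ u = f`. Because `d₂ d₁ = 0`, the
closure `(ker d₁†)ᗮ` of the range of `d₁` lies in `ker d₂`; splitting test vectors along `ker d₁†`
and along `ker d₂` shows that `d₂ u ∈ D(d₂†)` and `d₁† u ∈ D(d₁††) = D(d₁)`, and the two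
projections of `f - u` add up to `f - u`, so `u` is a strong solution. Finally, a nonnegative
symmetric operator `A` with `1 + A` surjective is densely defined and self-adjoint.
-/

open scoped InnerProductSpace

theorem Submodule.starProjection_add_starProjection_eq_self {𝕜 E : Type*} [RCLike 𝕜]
    [NormedAddCommGroup E] [InnerProductSpace 𝕜 E] {K L : Submodule 𝕜 E}
    [K.HasOrthogonalProjection] [L.HasOrthogonalProjection] (hKL : Kᗮ ≤ L) {v : E}
    (hv : v ∈ (K ⊓ L)ᗮ) : K.starProjection v + L.starProjection v = v := by
  set c := K.starProjection v + L.starProjection v - v with hc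
  have hcK : c ∈ K := by
    have hLK : Lᗮ ≤ K := Submodule.orthogonal_le_iff_orthogonal_le.mp hKL
    have := K.sub_mem (K.starProjection_apply_mem v) (hLK (L.sub_starProjection_mem_orthogonal v))
    rw [hc]
    convert this using 1
    abel
  have hcL : c ∈ L := by
    have := L.sub_mem (L.starProjection_apply_mem v) (hKL (K.sub_starProjection_mem_orthogonal v))
    rw [hc]
    convert this using 1
    abel
  have hvc : ⟪v, c⟫_𝕜 = 0 := (Submodule.mem_orthogonal' _ _).mp hv c ⟨hcK, hcL⟩
  have hKc : ⟪K.starProjection v, c⟫_𝕜 = 0 := by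
    rw [K.inner_starProjection_left_eq_right, K.starProjection_eq_self_iff.mpr hcK, hvc]
  have hLc : ⟪L.starProjection v, c⟫_𝕜 = 0 := by
    rw [L.inner_starProjection_left_eq_right, L.starProjection_eq_self_iff.mpr hcL, hvc]
  have hcc : ⟪c, c⟫_𝕜 = 0 := by
    simp only [c, inner_sub_left, inner_add_left, hKc, hLc, hvc, sub_zero, add_zero]
  exact sub_eq_zero.mp (inner_self_eq_zero.mp hcc)

theorem RCLike.inner_self_nonneg {𝕜 E : Type*} [RCLike 𝕜] [NormedAddCommGroup E]
    [InnerProductSpace 𝕜 E] (x : E) : 0 ≤ ⟪x, x⟫_𝕜 := by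
  rw [← inner_self_ofReal_re]
  exact RCLike.ofReal_nonneg.mpr _root_.inner_self_nonneg

namespace LinearPMap

section

variable {R E F : Type*} [Ring R] [AddCommGroup E] [Module R E] [AddCommGroup F] [Module R F]

theorem mem_graph_iff_exists (T : E →ₗ.[R] F) {x : E} {y : F} :
    (x, y) ∈ T.graph ↔ ∃ h : x ∈ T.domain, T ⟨x, h⟩ = y :=
  ⟨fun hxy => ⟨mem_domain_of_mem_graph hxy, ((image_iff _).mpr hxy).symm⟩,
    fun ⟨h, hy⟩ => (image_iff h).mp hy.symm⟩

def ker (T : E →ₗ.[R] F) : Submodule R E :=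
  T.graph.comap (LinearMap.inl R E F)

theorem mem_ker {T : E →ₗ.[R] F} {x : E} : x ∈ T.ker ↔ (x, 0) ∈ T.graph :=
  Iff.rfl

end

theorem IsClosed.isClosed_ker {R E F : Type*} [CommRing R] [AddCommGroup E] [Module R E]
    [AddCommGroup F] [Module R F] [TopologicalSpace E] [TopologicalSpace F] {T : E →ₗ.[R] F}
    (hT : T.IsClosed) : _root_.IsClosed (T.ker : Set E) :=
  hT.preimage (continuous_id.prodMk continuous_const)

variable {𝕜 E F G : Type*} [RCLike 𝕜]
  [NormedAddCommGroup E] [InnerProductSpace 𝕜 E] [NormedAddCommGroup F] [InnerProductSpace 𝕜 F]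
  [NormedAddCommGroup G] [InnerProductSpace 𝕜 G]

theorem mem_graph_adjoint_iff [CompleteSpace E] {T : E →ₗ.[𝕜] F} (hT : Dense (T.domain : Set E))
    {y : F} {w : E} : (y, w) ∈ T†.graph ↔ ∀ x z, (x, z) ∈ T.graph → ⟪z, y⟫_𝕜 = ⟪x, w⟫_𝕜 := by
  simp only [adjoint_graph_eq_graph_adjoint hT, Submodule.mem_adjoint_iff, sub_eq_zero]

theorem ker_adjoint [CompleteSpace E] {T : E →ₗ.[𝕜] F} (hT : Dense (T.domain : Set E)) :
    T†.ker = (LinearMap.range T.toFun)ᗮ := by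
  ext y
  simp only [mem_ker, mem_graph_adjoint_iff hT, inner_zero_right, Submodule.mem_orthogonal,
    ← graph_map_snd_eq_range, Submodule.mem_map, LinearMap.snd_apply, forall_exists_index,
    and_imp, Prod.forall]
  grind

theorem orthogonal_ker_adjoint_le_ker [CompleteSpace E] [CompleteSpace F] {T : E →ₗ.[𝕜] F}
    {S : F →ₗ.[𝕜] G} (hT : Dense (T.domain : Set E)) (hS : S.IsClosed)
    (hST : LinearMap.range T.toFun ≤ S.ker) : (T†.ker)ᗮ ≤ S.ker := by
  rw [ker_adjoint hT, Submodule.orthogonal_orthogonal_eq_closure]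
  exact Submodule.topologicalClosure_minimal _ hST hS.isClosed_ker

theorem IsClosed.mem_graph_iff_adjoint [CompleteSpace E] [CompleteSpace F] {T : E →ₗ.[𝕜] F}
    (hTc : T.IsClosed) (hT : Dense (T.domain : Set E)) {x : E} {z : F} :
    (x, z) ∈ T.graph ↔ ∀ y w, (y, w) ∈ T†.graph → ⟪w, x⟫_𝕜 = ⟪y, z⟫_𝕜 := by
  refine ⟨fun hxz y w hyw => ?_, fun h => ?_⟩
  · rw [← inner_conj_symm, ← (mem_graph_adjoint_iff hT).mp hyw x z hxz, inner_conj_symm]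
  let e := WithLp.prodContinuousLinearEquiv 2 𝕜 E F
  let Γ := T.graph.comap (e : WithLp 2 (E × F) →ₗ[𝕜] E × F)
  have : CompleteSpace Γ := (hTc.preimage e.continuous).completeSpace_coe
  suffices WithLp.toLp 2 (x, z) ∈ Γᗮᗮ by rwa [Submodule.orthogonal_orthogonal] at this
  refine (Submodule.mem_orthogonal _ _).mpr fun q hq => ?_
  have hq' : (q.ofLp.2, -q.ofLp.1) ∈ T†.graph := (mem_graph_adjoint_iff hT).mpr fun a b hab => by
    have := (Submodule.mem_orthogonal _ _).mp hq (WithLp.toLp 2 (a, b)) hab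
    simp only [WithLp.prod_inner_apply, inner_neg_right] at this ⊢
    linear_combination this
  have := h _ _ hq'
  simp only [WithLp.prod_inner_apply, inner_neg_left] at this ⊢
  linear_combination -this

theorem inner_eq_inner_starProjection_of_orthogonal_le_ker {S : E →ₗ.[𝕜] F}
    {K : Submodule 𝕜 E} [K.HasOrthogonalProjection] (hK : Kᗮ ≤ S.ker) {u : F} {v : E}
    (h : ∀ x y, x ∈ K → (x, y) ∈ S.graph → ⟪y, u⟫_𝕜 = ⟪x, v⟫_𝕜) {x : E} {y : F}
    (hxy : (x, y) ∈ S.graph) : ⟪y, u⟫_𝕜 = ⟪x, K.starProjection v⟫_𝕜 := by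
  have hx : (K.starProjection x, y) ∈ S.graph := by
    simpa using S.graph.sub_mem hxy (hK (K.sub_starProjection_mem_orthogonal x))
  rw [← K.inner_starProjection_left_eq_right]
  exact h _ _ (K.starProjection_apply_mem x) hx

theorem exists_weak_solution [CompleteSpace E] [CompleteSpace F] [CompleteSpace G]
    {S : E →ₗ.[𝕜] F} {T : E →ₗ.[𝕜] G} (hS : S.IsClosed) (hT : T.IsClosed) (f : E) :
    ∃ u a b, (u, a) ∈ S.graph ∧ (u, b) ∈ T.graph ∧
      ∀ x y z, (x, y) ∈ S.graph → (x, z) ∈ T.graph → ⟪y, a⟫_𝕜 + ⟪z, b⟫_𝕜 = ⟪x, f - u⟫_𝕜 := by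
  let πS : WithLp 2 (E × WithLp 2 (F × G)) →L[𝕜] E × F :=
    (WithLp.fstL 2 𝕜 E _).prod ((WithLp.fstL 2 𝕜 F G).comp (WithLp.sndL 2 𝕜 E _))
  let πT : WithLp 2 (E × WithLp 2 (F × G)) →L[𝕜] E × G :=
    (WithLp.fstL 2 𝕜 E _).prod ((WithLp.sndL 2 𝕜 F G).comp (WithLp.sndL 2 𝕜 E _))
  let K := S.graph.comap πS.toLinearMap ⊓ T.graph.comap πT.toLinearMap
  have : CompleteSpace K :=
    ((hS.preimage πS.continuous).inter (hT.preimage πT.continuous)).completeSpace_coe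
  let f₀ := WithLp.toLp 2 (f, WithLp.toLp 2 ((0 : F), (0 : G)))
  obtain ⟨hpS, hpT⟩ := K.starProjection_apply_mem f₀
  refine ⟨_, _, _, hpS, hpT, fun x y z hxy hxz => ?_⟩
  have := (Submodule.mem_orthogonal _ _).mp (K.sub_starProjection_mem_orthogonal f₀)
    (WithLp.toLp 2 (x, WithLp.toLp 2 (y, z))) ⟨hxy, hxz⟩
  simp only [inner_sub_right, WithLp.prod_inner_apply, inner_zero_right, add_zero,
    WithLp.ofLp_fst, WithLp.ofLp_snd, ContinuousLinearMap.toLinearMap_comp, WithLp.coe_fstL,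
    WithLp.coe_sndL, LinearMap.coe_comp, Function.comp_apply, WithLp.sndₗ_apply,
    WithLp.fstₗ_apply, f₀] at this ⊢
  linear_combination -this

theorem dense_domain_of_nonneg_of_exists_add_apply_eq [CompleteSpace E] {A : E →ₗ.[𝕜] E}
    (hA : ∀ x : A.domain, 0 ≤ ⟪A x, (x : E)⟫_𝕜) (hsurj : ∀ f, ∃ x : A.domain, x + A x = f) :
    Dense (A.domain : Set E) := by
  rw [Submodule.dense_iff_topologicalClosure_eq_top, Submodule.topologicalClosure_eq_top_iff,
    Submodule.eq_bot_iff]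
  intro f hf
  obtain ⟨x, rfl⟩ := hsurj f
  have hre : RCLike.re ⟪(x : E), x⟫_𝕜 + RCLike.re ⟪A x, (x : E)⟫_𝕜 = 0 := by
    have := congrArg RCLike.re ((Submodule.mem_orthogonal _ _).mp hf x x.2)
    rwa [inner_add_right, _root_.map_add, inner_re_symm _ (A x : E), _root_.map_zero] at this
  have hx : (x : E) = 0 :=
    re_inner_self_nonpos.mp (by linarith [(RCLike.nonneg_iff.mp (hA x)).1])
  rw [hx, show x = 0 from Subtype.ext hx, map_zero, add_zero]

theorem adjoint_eq_self_of_exists_add_apply_eq [CompleteSpace E] {A : E →ₗ.[𝕜] E}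
    (hsymm : A.IsFormalAdjoint A) (hA : Dense (A.domain : Set E))
    (hsurj : ∀ f, ∃ x : A.domain, x + A x = f) : A† = A := by
  have hle : A ≤ A† := hsymm.le_adjoint hA
  refine (eq_of_le_of_domain_eq hle (le_antisymm hle.1 fun y hy => ?_)).symm
  obtain ⟨x, hx⟩ := hsurj (y + A† ⟨y, hy⟩)
  have horth : ∀ z : A.domain, ⟪(z : E) + A z, y - x⟫_𝕜 = 0 := fun z => by
    have h := congrArg (inner 𝕜 (z : E)) hx
    rw [inner_add_right, inner_add_right] at h
    rw [inner_add_left, inner_sub_right, inner_sub_right, hsymm z x,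
      (adjoint_isFormalAdjoint hA).symm z ⟨y, hy⟩]
    linear_combination -h
  obtain ⟨z, hz⟩ := hsurj (y - x)
  have hyx := horth z
  rw [hz, inner_self_eq_zero, sub_eq_zero] at hyx
  exact hyx ▸ x.2

end LinearPMap

section HodgeLaplacian

open LinearPMap

variable {𝕜 H₁ H₂ H₃ : Type*} [RCLike 𝕜]
  [NormedAddCommGroup H₁] [InnerProductSpace 𝕜 H₁] [CompleteSpace H₁]
  [NormedAddCommGroup H₂] [InnerProductSpace 𝕜 H₂] [CompleteSpace H₂]
  [NormedAddCommGroup H₃] [InnerProductSpace 𝕜 H₃]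
  {d₁ : H₁ →ₗ.[𝕜] H₂} {d₂ : H₂ →ₗ.[𝕜] H₃} {Δ : H₂ →ₗ.[𝕜] H₂}

def IsHodgeLaplacian (d₁ : H₁ →ₗ.[𝕜] H₂) (d₂ : H₂ →ₗ.[𝕜] H₃) (Δ : H₂ →ₗ.[𝕜] H₂) : Prop :=
  ∀ x w, (x, w) ∈ Δ.graph ↔ ∃ a b c e, (x, a) ∈ d₂.graph ∧ (a, c) ∈ d₂†.graph ∧
    (x, b) ∈ d₁†.graph ∧ (b, e) ∈ d₁.graph ∧ c + e = w

theorem isHodgeLaplacian_of_domain_apply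
    (hdom : ∀ x : H₂, x ∈ Δ.domain ↔ ∃ (h₂ : x ∈ d₂.domain) (h₁ : x ∈ d₁†.domain),
      d₂ ⟨x, h₂⟩ ∈ d₂†.domain ∧ d₁† ⟨x, h₁⟩ ∈ d₁.domain)
    (hval : ∀ (x : H₂) (hx : x ∈ Δ.domain) (h₂ : x ∈ d₂.domain) (h₁ : x ∈ d₁†.domain)
      (h₂' : d₂ ⟨x, h₂⟩ ∈ d₂†.domain) (h₁' : d₁† ⟨x, h₁⟩ ∈ d₁.domain),
      Δ ⟨x, hx⟩ = d₂† ⟨d₂ ⟨x, h₂⟩, h₂'⟩ + d₁ ⟨d₁† ⟨x, h₁⟩, h₁'⟩) :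
    IsHodgeLaplacian d₁ d₂ Δ := by
  intro x w
  simp only [mem_graph_iff_exists]
  constructor
  · rintro ⟨hx, rfl⟩
    obtain ⟨h₂, h₁, h₂', h₁'⟩ := (hdom x).mp hx
    exact ⟨_, _, _, _, ⟨h₂, rfl⟩, ⟨h₂', rfl⟩, ⟨h₁, rfl⟩, ⟨h₁', rfl⟩, (hval ..).symm⟩
  · rintro ⟨_, _, _, _, ⟨h₂, rfl⟩, ⟨h₂', rfl⟩, ⟨h₁, rfl⟩, ⟨h₁', rfl⟩, rfl⟩
    exact ⟨(hdom x).mpr ⟨h₂, h₁, h₂', h₁'⟩, hval ..⟩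

namespace IsHodgeLaplacian

variable (hΔ : IsHodgeLaplacian d₁ d₂ Δ) (hd₁ : Dense (d₁.domain : Set H₁))
  (hd₂ : Dense (d₂.domain : Set H₂))
include hΔ hd₁ hd₂

theorem exists_inner_eq (x : Δ.domain) :
    ∃ a b, ((x : H₂), a) ∈ d₂.graph ∧ ((x : H₂), b) ∈ d₁†.graph ∧
      ∀ y a' b', (y, a') ∈ d₂.graph → (y, b') ∈ d₁†.graph → ⟪Δ x, y⟫_𝕜 = ⟪a, a'⟫_𝕜 + ⟪b, b'⟫_𝕜 := by
  obtain ⟨a, b, c, e, ha, hc, hb, he, hce⟩ := (hΔ x (Δ x)).mp (Δ.mem_graph x)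
  refine ⟨a, b, ha, hb, fun y a' b' ha' hb' => ?_⟩
  rw [← hce, inner_add_left, (mem_graph_adjoint_iff hd₁).mp hb' b e he, ← inner_conj_symm c,
    ← (mem_graph_adjoint_iff hd₂).mp hc y a' ha', inner_conj_symm]

theorem isFormalAdjoint : Δ.IsFormalAdjoint Δ := fun x y => by
  obtain ⟨a, b, ha, hb, hx⟩ := hΔ.exists_inner_eq hd₁ hd₂ x
  obtain ⟨a', b', ha', hb', hy⟩ := hΔ.exists_inner_eq hd₁ hd₂ y
  rw [hx _ _ _ ha' hb', ← inner_conj_symm (x : H₂) (Δ y), hy _ _ _ ha hb, _root_.map_add,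
    inner_conj_symm, inner_conj_symm]

theorem inner_apply_self_nonneg (x : Δ.domain) : 0 ≤ ⟪Δ x, (x : H₂)⟫_𝕜 := by
  obtain ⟨a, b, ha, hb, hx⟩ := hΔ.exists_inner_eq hd₁ hd₂ x
  rw [hx _ _ _ ha hb]
  exact add_nonneg (RCLike.inner_self_nonneg a) (RCLike.inner_self_nonneg b)

theorem exists_add_apply_eq [CompleteSpace H₃] (hd₁c : d₁.IsClosed) (hd₂c : d₂.IsClosed)
    (hd : LinearMap.range d₁.toFun ≤ d₂.ker) (f : H₂) : ∃ x : Δ.domain, x + Δ x = f := by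
  obtain ⟨u, a, b, ha, hb, hweak⟩ := exists_weak_solution hd₂c (adjoint_isClosed hd₁) f
  have : CompleteSpace d₁†.ker := (adjoint_isClosed hd₁).isClosed_ker.completeSpace_coe
  have : CompleteSpace d₂.ker := hd₂c.isClosed_ker.completeSpace_coe
  have hN₁ : (d₁†.ker)ᗮ ≤ d₂.ker := orthogonal_ker_adjoint_le_ker hd₁ hd₂c hd
  have hN₂ : (d₂.ker)ᗮ ≤ d₁†.ker := ker_adjoint hd₁ ▸ Submodule.orthogonal_le hd
  have hc : (a, d₁†.ker.starProjection (f - u)) ∈ d₂†.graph :=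
    (mem_graph_adjoint_iff hd₂).mpr fun _ _ =>
      inner_eq_inner_starProjection_of_orthogonal_le_ker hN₁ fun x y hx hxy => by
        simpa using hweak x y 0 hxy hx
  have he : (b, d₂.ker.starProjection (f - u)) ∈ d₁.graph :=
    (hd₁c.mem_graph_iff_adjoint hd₁).mpr fun _ _ =>
      inner_eq_inner_starProjection_of_orthogonal_le_ker hN₂ fun x z hx hxz => by
        simpa using hweak x 0 z hx hxz
  have hv : f - u ∈ (d₁†.ker ⊓ d₂.ker)ᗮ := fun x ⟨hx₁, hx₂⟩ => by
    simpa using (hweak x 0 0 hx₂ hx₁).symm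
  obtain ⟨hu, hΔu⟩ := (mem_graph_iff_exists Δ).mp <| (hΔ u (f - u)).mpr
    ⟨a, b, _, _, ha, hc, hb, he, Submodule.starProjection_add_starProjection_eq_self hN₁ hv⟩
  exact ⟨⟨u, hu⟩, by rw [hΔu, add_sub_cancel]⟩

end IsHodgeLaplacian

end HodgeLaplacian

/-- The Hodge Laplace operator associated to a two-term complex of densely defined
closed operators between complex Hilbert spaces is a non-negative self-adjoint operator. -/
theorem hodgeLaplace_selfAdjoint_nonneg
    {H₁ H₂ H₃ : Type*}
    [NormedAddCommGroup H₁] [InnerProductSpace ℂ H₁] [CompleteSpace H₁]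
    [NormedAddCommGroup H₂] [InnerProductSpace ℂ H₂] [CompleteSpace H₂]
    [NormedAddCommGroup H₃] [InnerProductSpace ℂ H₃] [CompleteSpace H₃]
    (d₁ : H₁ →ₗ.[ℂ] H₂) (d₂ : H₂ →ₗ.[ℂ] H₃)
    (hd₁ : Dense (d₁.domain : Set H₁)) (hd₂ : Dense (d₂.domain : Set H₂))
    (hd₁c : d₁.IsClosed) (hd₂c : d₂.IsClosed)
    -- the complex property: `d₂ ∘ d₁ = 0`
    (hmem : ∀ x : d₁.domain, d₁ x ∈ d₂.domain)
    (hcomp : ∀ (x : d₁.domain) (h : d₁ x ∈ d₂.domain), d₂ ⟨d₁ x, h⟩ = 0)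
    -- `Δ` is the Hodge Laplace operator of the complex:
    (Δ : H₂ →ₗ.[ℂ] H₂)
    (hΔdom : ∀ x : H₂, x ∈ Δ.domain ↔
      ∃ (h₂ : x ∈ d₂.domain) (h₁ : x ∈ d₁.adjoint.domain),
        d₂ ⟨x, h₂⟩ ∈ d₂.adjoint.domain ∧ d₁.adjoint ⟨x, h₁⟩ ∈ d₁.domain)
    (hΔval : ∀ (x : H₂) (hx : x ∈ Δ.domain) (h₂ : x ∈ d₂.domain)
      (h₁ : x ∈ d₁.adjoint.domain) (h₂' : d₂ ⟨x, h₂⟩ ∈ d₂.adjoint.domain)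
      (h₁' : d₁.adjoint ⟨x, h₁⟩ ∈ d₁.domain),
      Δ ⟨x, hx⟩ = d₂.adjoint ⟨d₂ ⟨x, h₂⟩, h₂'⟩ + d₁ ⟨d₁.adjoint ⟨x, h₁⟩, h₁'⟩) :
    Dense (Δ.domain : Set H₂) ∧ Δ.adjoint = Δ ∧
      ∀ x : Δ.domain, 0 ≤ ⟪Δ x, (x : H₂)⟫ := by
  have hΔ : IsHodgeLaplacian d₁ d₂ Δ := isHodgeLaplacian_of_domain_apply hΔdom hΔval
  have hd : LinearMap.range d₁.toFun ≤ d₂.ker := by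
    rintro _ ⟨x, rfl⟩
    exact (d₂.mem_graph_iff_exists).mpr ⟨hmem x, hcomp x (hmem x)⟩
  have hnonneg := hΔ.inner_apply_self_nonneg hd₁ hd₂
  have hsurj := hΔ.exists_add_apply_eq hd₁ hd₂ hd₁c hd₂c hd
  have hdense := LinearPMap.dense_domain_of_nonneg_of_exists_add_apply_eq hnonneg hsurj
  exact ⟨hdense,
    LinearPMap.adjoint_eq_self_of_exists_add_apply_eq (hΔ.isFormalAdjoint hd₁ hd₂) hdense hsurj,
    hnonneg⟩
end

section
/- Let H₁, H₂, H₃ be complex Hilbert spaces and d₁ : H₁ → H₂, d₂ : H₂ → H₃ densely defined closed operators with the complex property. Then H₂ is the orthogonal direct sum of three mutually orthogonal closed subspaces: the space of harmonic fields 𝓗 = {x ∈ D(d₂) ∩ D(d₁†) : d₂x = 0 and d₁†x = 0}, the closure of the range of d₁, and the closure of the range of d₂†. -/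
open scoped ComplexInnerProductSpace

/-!
Write `M₁` for the closure of `ran d₁` and `M₂` for that of `ran d₂†`. For a densely defined `T`
one has `(ran T)ᗮ = ker T†`, and if `T` is moreover closed, `(ran T†)ᗮ = ker T`: the graph of `T`
is closed, hence equal to its double orthogonal complement, and the orthogonal complement of
the graph is the rotated graph of `T†`. So `𝓗 = M₁ᗮ ∩ M₂ᗮ` is closed, and the complex property
gives `ran d₁ ⊆ ker d₂ = M₂ᗮ`, i.e. `M₁ ⟂ M₂`. Projecting first onto `M₂` and then onto `M₁`
splits every vector.
-/

namespace LinearPMap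

open scoped InnerProductSpace

variable {𝕜 E F : Type*} [RCLike 𝕜]
  [NormedAddCommGroup E] [InnerProductSpace 𝕜 E]
  [NormedAddCommGroup F] [InnerProductSpace 𝕜 F]
  {T : E →ₗ.[𝕜] F}

-- `E × F` carries the sup norm; the orthogonal complement of the graph lives in the `L²` sum.
variable (T) in
def graphL2 : Submodule 𝕜 (WithLp 2 (E × F)) :=
  T.graph.comap (WithLp.linearEquiv 2 𝕜 (E × F)).toLinearMap

theorem isClosed_graphL2 (hT : T.IsClosed) :
    _root_.IsClosed (T.graphL2 : Set (WithLp 2 (E × F))) :=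
  hT.preimage (WithLp.prod_continuous_ofLp 2 E F)

variable [CompleteSpace E]

theorem mem_orthogonal_range_iff (hT : Dense (T.domain : Set E)) {y : F} :
    y ∈ (LinearMap.range T.toFun)ᗮ ↔ ∃ hy : y ∈ T†.domain, T† ⟨y, hy⟩ = 0 := by
  constructor
  · intro h
    have h' (x : T.domain) : ⟪y, T x⟫_𝕜 = 0 :=
      Submodule.inner_left_of_mem_orthogonal (LinearMap.mem_range_self T.toFun x) h
    have hy : y ∈ T†.domain := mem_adjoint_domain_of_exists y ⟨0, fun x => by simp [h' x]⟩
    exact ⟨hy, adjoint_apply_eq hT ⟨y, hy⟩ fun x => by simp [h' x]⟩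
  · rintro ⟨hy, hTy⟩
    rw [Submodule.mem_orthogonal]
    rintro _ ⟨x, rfl⟩
    rw [inner_eq_zero_symm]
    simpa [hTy] using (adjoint_isFormalAdjoint hT ⟨y, hy⟩ x).symm

theorem adjoint_apply_of_mem_orthogonal_graphL2 (hT : Dense (T.domain : Set E))
    {u : WithLp 2 (E × F)} (hu : u ∈ T.graphL2ᗮ) :
    ∃ hb : u.ofLp.2 ∈ T†.domain, T† ⟨u.ofLp.2, hb⟩ = -u.ofLp.1 := by
  have key (x : T.domain) : ⟪-u.ofLp.1, (x : E)⟫_𝕜 = ⟪u.ofLp.2, T x⟫_𝕜 := by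
    have hx : WithLp.toLp 2 ((x : E), T x) ∈ T.graphL2 := T.mem_graph x
    have := Submodule.inner_left_of_mem_orthogonal hx hu
    rw [WithLp.prod_inner_apply] at this
    rw [inner_neg_left]
    linear_combination -this
  have hb : u.ofLp.2 ∈ T†.domain := mem_adjoint_domain_of_exists _ ⟨_, key⟩
  exact ⟨hb, adjoint_apply_eq hT ⟨_, hb⟩ key⟩

theorem mem_orthogonal_range_adjoint_iff [CompleteSpace F] (hT : Dense (T.domain : Set E))
    (hTc : T.IsClosed) {x : E} :
    x ∈ (LinearMap.range T†.toFun)ᗮ ↔ ∃ hx : x ∈ T.domain, T ⟨x, hx⟩ = 0 := by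
  constructor
  · intro h
    have : CompleteSpace T.graphL2 := (isClosed_graphL2 hTc).completeSpace_coe
    have hx0 : WithLp.toLp 2 (x, (0 : F)) ∈ T.graphL2ᗮᗮ := by
      rw [Submodule.mem_orthogonal]
      intro u hu
      obtain ⟨hb, hTb⟩ := adjoint_apply_of_mem_orthogonal_graphL2 hT hu
      have hbx : ⟪T† ⟨_, hb⟩, x⟫_𝕜 = 0 :=
        Submodule.inner_right_of_mem_orthogonal (LinearMap.mem_range_self T†.toFun ⟨_, hb⟩) h
      rw [hTb, inner_neg_left, neg_eq_zero] at hbx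
      simpa using hbx
    rw [Submodule.orthogonal_orthogonal] at hx0
    have hgraph : (x, (0 : F)) ∈ T.graph := hx0
    have hx := mem_domain_of_mem_graph hgraph
    exact ⟨hx, ((image_iff hx).mpr hgraph).symm⟩
  · rintro ⟨hx, hTx⟩
    rw [Submodule.mem_orthogonal]
    rintro _ ⟨y, rfl⟩
    simpa [hTx] using adjoint_isFormalAdjoint hT y ⟨x, hx⟩

end LinearPMap

namespace Submodule

variable {𝕜 E : Type*} [RCLike 𝕜] [NormedAddCommGroup E] [InnerProductSpace 𝕜 E]

theorem exists_add_add_of_le_orthogonal {K₁ K₂ : Submodule 𝕜 E} [K₁.HasOrthogonalProjection]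
    [K₂.HasOrthogonalProjection] (h : K₁ ≤ K₂ᗮ) (z : E) :
    ∃ a ∈ K₁ᗮ ⊓ K₂ᗮ, ∃ b ∈ K₁, ∃ c ∈ K₂, z = a + b + c := by
  obtain ⟨c, hc, w, hw, rfl⟩ := K₂.exists_add_mem_mem_orthogonal z
  obtain ⟨b, hb, a, ha, rfl⟩ := K₁.exists_add_mem_mem_orthogonal w
  have ha₂ : a ∈ K₂ᗮ := by simpa using K₂ᗮ.sub_mem hw (h hb)
  exact ⟨a, ⟨ha, ha₂⟩, b, hb, c, hc, by abel⟩

end Submodule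

theorem hodge_kodaira_decomposition_general
    {H₁ H₂ H₃ : Type*}
    [NormedAddCommGroup H₁] [InnerProductSpace ℂ H₁] [CompleteSpace H₁]
    [NormedAddCommGroup H₂] [InnerProductSpace ℂ H₂] [CompleteSpace H₂]
    [NormedAddCommGroup H₃] [InnerProductSpace ℂ H₃] [CompleteSpace H₃]
    (d₁ : H₁ →ₗ.[ℂ] H₂) (d₂ : H₂ →ₗ.[ℂ] H₃)
    (hd₁ : Dense (d₁.domain : Set H₁)) (hd₂ : Dense (d₂.domain : Set H₂))
    (hd₂c : d₂.IsClosed)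
    -- the complex property: `d₂ ∘ d₁ = 0`
    (hmem : ∀ x : d₁.domain, d₁ x ∈ d₂.domain)
    (hcomp : ∀ (x : d₁.domain) (h : d₁ x ∈ d₂.domain), d₂ ⟨d₁ x, h⟩ = 0)
    -- the space of harmonic fields and the ranges of `d₁` and of `d₂†`:
    (Harm R₁ R₂ : Set H₂)
    (hHarm : Harm = {x : H₂ | ∃ (h₂ : x ∈ d₂.domain) (h₁ : x ∈ d₁.adjoint.domain),
      d₂ ⟨x, h₂⟩ = 0 ∧ d₁.adjoint ⟨x, h₁⟩ = 0})
    (hR₁ : R₁ = Set.range fun x : d₁.domain => d₁ x)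
    (hR₂ : R₂ = Set.range fun y : d₂.adjoint.domain => d₂.adjoint y) :
    IsClosed Harm ∧
    (∀ x ∈ Harm, ∀ y ∈ closure R₁, ⟪x, y⟫ = 0) ∧
    (∀ x ∈ Harm, ∀ y ∈ closure R₂, ⟪x, y⟫ = 0) ∧
    (∀ x ∈ closure R₁, ∀ y ∈ closure R₂, ⟪x, y⟫ = 0) ∧
    (∀ z : H₂, ∃ a ∈ Harm, ∃ b ∈ closure R₁, ∃ c ∈ closure R₂, z = a + b + c) := by
  set M₁ := (LinearMap.range d₁.toFun).topologicalClosure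
  set M₂ := (LinearMap.range d₂.adjoint.toFun).topologicalClosure
  have hM₁ : closure R₁ = M₁ := by
    rw [hR₁, Submodule.topologicalClosure_coe, LinearMap.coe_range]; rfl
  have hM₂ : closure R₂ = M₂ := by
    rw [hR₂, Submodule.topologicalClosure_coe, LinearMap.coe_range]; rfl
  have hHarm_eq : Harm = (M₁ᗮ ⊓ M₂ᗮ : Submodule ℂ H₂) := by
    ext x
    rw [hHarm, Submodule.orthogonal_closure, Submodule.orthogonal_closure]
    simp only [Set.mem_ofPred_eq, SetLike.mem_coe, Submodule.mem_inf,
      LinearPMap.mem_orthogonal_range_iff hd₁,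
      LinearPMap.mem_orthogonal_range_adjoint_iff hd₂ hd₂c]
    tauto
  have hM₁₂ : M₁ ≤ M₂ᗮ := by
    rw [Submodule.orthogonal_closure]
    refine Submodule.topologicalClosure_minimal _ ?_ (Submodule.isClosed_orthogonal _)
    rintro _ ⟨x, rfl⟩
    exact (LinearPMap.mem_orthogonal_range_adjoint_iff hd₂ hd₂c).2 ⟨hmem x, hcomp x (hmem x)⟩
  rw [hHarm_eq, hM₁, hM₂]
  refine ⟨M₁.isClosed_orthogonal.inter M₂.isClosed_orthogonal,
    fun x hx y hy => Submodule.inner_left_of_mem_orthogonal hy hx.1,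
    fun x hx y hy => Submodule.inner_left_of_mem_orthogonal hy hx.2,
    fun x hx y hy => Submodule.inner_left_of_mem_orthogonal hy (hM₁₂ hx),
    Submodule.exists_add_add_of_le_orthogonal hM₁₂⟩

/-- Hodge decomposition (Kodaira decomposition): for a two-term complex of densely defined
closed operators between complex Hilbert spaces, `H₂` decomposes as the orthogonal direct
sum of the harmonic fields, the closure of the range of `d₁`, and the closure of the range
of `d₂†`. -/
theorem hodge_kodaira_decomposition
    {H₁ H₂ H₃ : Type*}
    [NormedAddCommGroup H₁] [InnerProductSpace ℂ H₁] [CompleteSpace H₁]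
    [NormedAddCommGroup H₂] [InnerProductSpace ℂ H₂] [CompleteSpace H₂]
    [NormedAddCommGroup H₃] [InnerProductSpace ℂ H₃] [CompleteSpace H₃]
    (d₁ : H₁ →ₗ.[ℂ] H₂) (d₂ : H₂ →ₗ.[ℂ] H₃)
    (hd₁ : Dense (d₁.domain : Set H₁)) (hd₂ : Dense (d₂.domain : Set H₂))
    (hd₁c : d₁.IsClosed) (hd₂c : d₂.IsClosed)
    -- the complex property: `d₂ ∘ d₁ = 0`
    (hmem : ∀ x : d₁.domain, d₁ x ∈ d₂.domain)
    (hcomp : ∀ (x : d₁.domain) (h : d₁ x ∈ d₂.domain), d₂ ⟨d₁ x, h⟩ = 0)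
    -- the space of harmonic fields and the ranges of `d₁` and of `d₂†`:
    (Harm R₁ R₂ : Set H₂)
    (hHarm : Harm = {x : H₂ | ∃ (h₂ : x ∈ d₂.domain) (h₁ : x ∈ d₁.adjoint.domain),
      d₂ ⟨x, h₂⟩ = 0 ∧ d₁.adjoint ⟨x, h₁⟩ = 0})
    (hR₁ : R₁ = Set.range fun x : d₁.domain => d₁ x)
    (hR₂ : R₂ = Set.range fun y : d₂.adjoint.domain => d₂.adjoint y) :
    IsClosed Harm ∧
    (∀ x ∈ Harm, ∀ y ∈ closure R₁, ⟪x, y⟫ = 0) ∧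
    (∀ x ∈ Harm, ∀ y ∈ closure R₂, ⟪x, y⟫ = 0) ∧
    (∀ x ∈ closure R₁, ∀ y ∈ closure R₂, ⟪x, y⟫ = 0) ∧
    (∀ z : H₂, ∃ a ∈ Harm, ∃ b ∈ closure R₁, ∃ c ∈ closure R₂, z = a + b + c) :=
  hodge_kodaira_decomposition_general d₁ d₂ hd₁ hd₂ hd₂c hmem hcomp Harm R₁ R₂ hHarm hR₁ hR₂
end

section
/- Let T and S be self-adjoint unbounded operators on a complex Hilbert space H (densely defined operators equal to their own Hilbert adjoints). Suppose there is a Hilbert basis (complete orthonormal family) (eᵢ)_{i ∈ I} of H and real numbers (μᵢ)_{i ∈ I} such that each eᵢ lies in D(T) ∩ D(S) and T eᵢ = μᵢ eᵢ and S eᵢ = μᵢ eᵢ for every i. Then T = S, i.e. D(T) = D(S) and Tx = Sx for all x in the common domain. -/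
/-!
A self-adjoint operator is symmetric, so on its eigenvector `bᵢ` with real eigenvalue `μᵢ` it
satisfies `⟪T x, bᵢ⟫ = μᵢ ⟪x, bᵢ⟫`, and likewise for `S`. Expanding in the Hilbert basis by
Parseval, `⟪T x, y⟫ = ∑ μᵢ ⟪x, bᵢ⟫ ⟪bᵢ, y⟫ = ⟪x, S y⟫`, so `S` is a formal adjoint of `T`, whence
`S ≤ T† = T`. By symmetry `T ≤ S`.
-/

open scoped InnerProductSpace

namespace LinearPMap

variable {𝕜 E ι : Type*} [RCLike 𝕜] [NormedAddCommGroup E] [InnerProductSpace 𝕜 E]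

theorem _root_.IsSelfAdjoint.isFormalAdjoint [CompleteSpace E] {A : E →ₗ.[𝕜] E}
    (hA : IsSelfAdjoint A) : A.IsFormalAdjoint A := by
  simpa only [isSelfAdjoint_def.mp hA] using adjoint_isFormalAdjoint hA.dense_domain

section Eigenvector

variable {A : E →ₗ.[𝕜] E} {v : E} {m : ℝ}

theorem IsFormalAdjoint.inner_apply_eigenvector (hA : A.IsFormalAdjoint A) (hv : v ∈ A.domain)
    (hAv : A ⟨v, hv⟩ = (m : 𝕜) • v) (x : A.domain) : ⟪A x, v⟫_𝕜 = m * ⟪(x : E), v⟫_𝕜 := by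
  rw [hA x ⟨v, hv⟩, hAv, inner_smul_right]

theorem IsFormalAdjoint.inner_eigenvector_apply (hA : A.IsFormalAdjoint A) (hv : v ∈ A.domain)
    (hAv : A ⟨v, hv⟩ = (m : 𝕜) • v) (x : A.domain) : ⟪v, A x⟫_𝕜 = m * ⟪v, (x : E)⟫_𝕜 := by
  rw [← hA ⟨v, hv⟩ x, hAv, inner_smul_left, RCLike.conj_ofReal]

end Eigenvector

theorem isFormalAdjoint_of_common_eigenbasis {T S : E →ₗ.[𝕜] E} (hT : T.IsFormalAdjoint T)
    (hS : S.IsFormalAdjoint S) (b : HilbertBasis ι 𝕜 E) (μ : ι → ℝ)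
    (hbT : ∀ i, ∃ h : b i ∈ T.domain, T ⟨b i, h⟩ = (μ i : 𝕜) • b i)
    (hbS : ∀ i, ∃ h : b i ∈ S.domain, S ⟨b i, h⟩ = (μ i : 𝕜) • b i) :
    T.IsFormalAdjoint S := by
  intro x y
  have hTx (i : ι) : ⟪T x, b i⟫_𝕜 = μ i * ⟪(x : E), b i⟫_𝕜 :=
    have ⟨hi, hTi⟩ := hbT i
    hT.inner_apply_eigenvector hi hTi x
  have hSy (i : ι) : ⟪b i, S y⟫_𝕜 = μ i * ⟪b i, (y : E)⟫_𝕜 :=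
    have ⟨hi, hSi⟩ := hbS i
    hS.inner_eigenvector_apply hi hSi y
  calc ⟪T x, (y : E)⟫_𝕜 = ∑' i, ⟪T x, b i⟫_𝕜 * ⟪b i, (y : E)⟫_𝕜 := (b.tsum_inner_mul_inner _ _).symm
    _ = ∑' i, ⟪(x : E), b i⟫_𝕜 * ⟪b i, S y⟫_𝕜 := by
      refine tsum_congr fun i => ?_
      rw [hTx, hSy]
      ring
    _ = ⟪(x : E), S y⟫_𝕜 := b.tsum_inner_mul_inner _ _

theorem le_of_common_eigenbasis [CompleteSpace E] {T S : E →ₗ.[𝕜] E} (hT : IsSelfAdjoint T)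
    (hS : S.IsFormalAdjoint S) (b : HilbertBasis ι 𝕜 E) (μ : ι → ℝ)
    (hbT : ∀ i, ∃ h : b i ∈ T.domain, T ⟨b i, h⟩ = (μ i : 𝕜) • b i)
    (hbS : ∀ i, ∃ h : b i ∈ S.domain, S ⟨b i, h⟩ = (μ i : 𝕜) • b i) : S ≤ T :=
  isSelfAdjoint_def.mp hT ▸
    (isFormalAdjoint_of_common_eigenbasis hT.isFormalAdjoint hS b μ hbT hbS).le_adjoint
      hT.dense_domain

end LinearPMap

theorem selfAdjoint_eq_of_common_eigenbasis_general
    {H : Type*} [NormedAddCommGroup H] [InnerProductSpace ℂ H] [CompleteSpace H]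
    (T S : H →ₗ.[ℂ] H)
    (hTsa : T.adjoint = T) (hSsa : S.adjoint = S)
    {I : Type*} (e : I → H) (μ : I → ℝ)
    (he : Orthonormal ℂ e)
    (hspan : Dense (Submodule.span ℂ (Set.range e) : Set H))
    (heT : ∀ i : I, ∃ h : e i ∈ T.domain, T ⟨e i, h⟩ = (μ i : ℂ) • e i)
    (heS : ∀ i : I, ∃ h : e i ∈ S.domain, S ⟨e i, h⟩ = (μ i : ℂ) • e i) :
    T = S := by
  have hT : IsSelfAdjoint T := hTsa
  have hS : IsSelfAdjoint S := hSsa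
  obtain ⟨b, rfl⟩ : ∃ b : HilbertBasis I ℂ H, ⇑b = e :=
    ⟨_, HilbertBasis.coe_mk he (Submodule.dense_iff_topologicalClosure_eq_top.mp hspan).ge⟩
  exact le_antisymm (LinearPMap.le_of_common_eigenbasis hS hT.isFormalAdjoint b μ heS heT)
    (LinearPMap.le_of_common_eigenbasis hT hS.isFormalAdjoint b μ heT heS)

/-- Two self-adjoint unbounded operators on a complex Hilbert space possessing a common
spectral resolution (a Hilbert basis of common eigenvectors with the same real
eigenvalues) coincide. -/
theorem selfAdjoint_eq_of_common_eigenbasis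
    {H : Type*} [NormedAddCommGroup H] [InnerProductSpace ℂ H] [CompleteSpace H]
    (T S : H →ₗ.[ℂ] H)
    (hTd : Dense (T.domain : Set H)) (hSd : Dense (S.domain : Set H))
    (hTsa : T.adjoint = T) (hSsa : S.adjoint = S)
    {I : Type*} (e : I → H) (μ : I → ℝ)
    (he : Orthonormal ℂ e)
    (hspan : Dense (Submodule.span ℂ (Set.range e) : Set H))
    (heT : ∀ i : I, ∃ h : e i ∈ T.domain, T ⟨e i, h⟩ = (μ i : ℂ) • e i)
    (heS : ∀ i : I, ∃ h : e i ∈ S.domain, S ⟨e i, h⟩ = (μ i : ℂ) • e i) :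
    T = S :=
  selfAdjoint_eq_of_common_eigenbasis_general T S hTsa hSsa e μ he hspan heT heS
end

section
/- Fix l > 0, κ > 1, real c, and λ̃ ≥ 0. Let f : (0,l] → ℝ be differentiable with differentiable flux F(x) = xᶜ f′(x) satisfying the Sturm–Liouville equation F′(x) = λ̃ x^{c−2κ} f(x) on (0,l], and assume the finiteness of ∫₀ˡ xᶜ f′(x)² dx and ∫₀ˡ x^{c−2κ} f(x)² dx. Then the limit L₀ = lim_{x→0⁺} xᶜ f(x) f′(x) exists and is finite, and the integration-by-parts identity ∫₀ˡ xᶜ f′(x)² dx + λ̃ ∫₀ˡ x^{c−2κ} f(x)² dx = lᶜ f(l) f′(l) − L₀ holds. -/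
open Set Filter MeasureTheory Topology

/-!
Along a solution, `d/dx (xᶜ f f′) = (xᶜ f′)′ f + xᶜ f′² = xᶜ f′² + λ̃ x^{c-2κ} f²`, which is integrable
on `(0, l]` by hypothesis. A function on `(0, l]` with integrable derivative has a limit at `0⁺`,
namely its value at `l` minus the integral of the derivative; this is the identity.
-/

section IntegrableDerivative

variable {E : Type*} [NormedAddCommGroup E] [NormedSpace ℝ E] [CompleteSpace E]
  {G g : ℝ → E} {a b : ℝ}

theorem integral_eq_sub_of_hasDerivWithinAt_Ioc
    (hderiv : ∀ x ∈ Ioc a b, HasDerivWithinAt G (g x) (Ioc a b) x)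
    (hint : IntegrableOn g (Ioc a b)) {x : ℝ} (hx : x ∈ Ioc a b) :
    ∫ t in x..b, g t = G b - G x := by
  have hsub : Icc x b ⊆ Ioc a b := fun t ht => ⟨hx.1.trans_le ht.1, ht.2⟩
  refine intervalIntegral.integral_eq_sub_of_hasDeriv_right_of_le hx.2
    (fun t ht => (hderiv t (hsub ht)).continuousWithinAt.mono hsub) (fun t ht => ?_) ?_
  · exact (hderiv t (hsub (Ioo_subset_Icc_self ht))).hasDerivAt
      (Ioc_mem_nhds (hx.1.trans ht.1) ht.2) |>.hasDerivWithinAt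
  · exact (intervalIntegrable_iff_integrableOn_Ioc_of_le hx.2).2
      (hint.mono_set (Ioc_subset_Ioc_left hx.1.le))

theorem tendsto_nhdsGT_of_hasDerivWithinAt_Ioc (hab : a < b)
    (hderiv : ∀ x ∈ Ioc a b, HasDerivWithinAt G (g x) (Ioc a b) x)
    (hint : IntegrableOn g (Ioc a b)) :
    Tendsto G (𝓝[>] a) (𝓝 (G b - ∫ x in Ioc a b, g x)) := by
  have hIcc : IntegrableOn g (uIcc a b) := by
    rw [uIcc_of_le hab.le]
    exact (integrableOn_Icc_iff_integrableOn_Ioc).2 hint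
  have hprim : Tendsto (fun x => ∫ t in x..b, g t) (𝓝[>] a) (𝓝 (∫ t in a..b, g t)) := by
    rw [← nhdsWithin_Ioo_eq_nhdsGT hab]
    refine ((intervalIntegral.continuousOn_primitive_interval_left hIcc) a left_mem_uIcc).mono ?_
    rw [uIcc_of_le hab.le]
    exact Ioo_subset_Icc_self
  rw [← intervalIntegral.integral_of_le hab.le]
  refine (tendsto_const_nhds.sub hprim).congr' ?_
  rw [← nhdsWithin_Ioo_eq_nhdsGT hab]
  filter_upwards [self_mem_nhdsWithin] with x hx
  rw [integral_eq_sub_of_hasDerivWithinAt_Ioc hderiv hint (Ioo_subset_Ioc_self hx), sub_sub_cancel]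

end IntegrableDerivative

theorem SL_integration_by_parts_general (l κ c lam : ℝ) (hl : 0 < l) (f f' : ℝ → ℝ)
    (hderiv : ∀ x ∈ Ioc (0 : ℝ) l, HasDerivWithinAt f (f' x) (Ioc (0 : ℝ) l) x)
    (hflux : ∀ x ∈ Ioc (0 : ℝ) l,
      HasDerivWithinAt (fun t : ℝ => t ^ c * f' t)
        (lam * x ^ (c - 2 * κ) * f x) (Ioc (0 : ℝ) l) x)
    (hint1 : IntegrableOn (fun x : ℝ => x ^ c * f' x ^ 2) (Ioc (0 : ℝ) l))
    (hint2 : IntegrableOn (fun x : ℝ => x ^ (c - 2 * κ) * f x ^ 2) (Ioc (0 : ℝ) l)) :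
    ∃ L₀ : ℝ,
      Tendsto (fun x : ℝ => x ^ c * f x * f' x) (nhdsWithin 0 (Ioi 0)) (nhds L₀) ∧
      (∫ x in Ioc (0 : ℝ) l, x ^ c * f' x ^ 2) +
        lam * ∫ x in Ioc (0 : ℝ) l, x ^ (c - 2 * κ) * f x ^ 2
        = l ^ c * f l * f' l - L₀ := by
  have hint2' := hint2.const_mul lam
  have hG : ∀ x ∈ Ioc (0 : ℝ) l, HasDerivWithinAt (fun t => t ^ c * f t * f' t)
      (x ^ c * f' x ^ 2 + lam * (x ^ (c - 2 * κ) * f x ^ 2)) (Ioc (0 : ℝ) l) x := by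
    intro x hx
    have hprod : (fun t => t ^ c * f t * f' t) = fun t => t ^ c * f' t * f t := by
      ext t; ring
    rw [hprod]
    exact ((hflux x hx).mul (hderiv x hx)).congr_deriv (by ring)
  refine ⟨_, tendsto_nhdsGT_of_hasDerivWithinAt_Ioc hl hG (hint1.add hint2'), ?_⟩
  rw [integral_add hint1 hint2', integral_const_mul]
  ring

/-- Integration by parts for the Sturm–Liouville equation `(xᶜ f′)′ = λ̃ x^{c-2κ} f` on
`(0, l]`: under the finiteness of `∫₀ˡ xᶜ f′² dx` and `∫₀ˡ x^{c-2κ} f² dx`, the flux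
`xᶜ f f′` has a finite limit `L₀` at `0⁺` and
`∫₀ˡ xᶜ f′² dx + λ̃ ∫₀ˡ x^{c-2κ} f² dx = lᶜ f(l) f′(l) − L₀`. -/
theorem SL_integration_by_parts (l κ c lam : ℝ) (hl : 0 < l) (hκ : 1 < κ)
    (hlam : 0 ≤ lam) (f f' : ℝ → ℝ)
    (hderiv : ∀ x ∈ Ioc (0 : ℝ) l, HasDerivWithinAt f (f' x) (Ioc (0 : ℝ) l) x)
    (hflux : ∀ x ∈ Ioc (0 : ℝ) l,
      HasDerivWithinAt (fun t : ℝ => t ^ c * f' t)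
        (lam * x ^ (c - 2 * κ) * f x) (Ioc (0 : ℝ) l) x)
    (hint1 : IntegrableOn (fun x : ℝ => x ^ c * f' x ^ 2) (Ioc (0 : ℝ) l))
    (hint2 : IntegrableOn (fun x : ℝ => x ^ (c - 2 * κ) * f x ^ 2) (Ioc (0 : ℝ) l)) :
    ∃ L₀ : ℝ,
      Tendsto (fun x : ℝ => x ^ c * f x * f' x) (nhdsWithin 0 (Ioi 0)) (nhds L₀) ∧
      (∫ x in Ioc (0 : ℝ) l, x ^ c * f' x ^ 2) +
        lam * ∫ x in Ioc (0 : ℝ) l, x ^ (c - 2 * κ) * f x ^ 2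
        = l ^ c * f l * f' l - L₀ :=
  SL_integration_by_parts_general l κ c lam hl f f' hderiv hflux hint1 hint2
end

section
/- Fix l > 0, κ > 1, real c, and λ̃ > 0. Let f : (0,l] → ℝ be continuous, differentiable on (0,l] with differentiable flux F(x) = xᶜ f′(x) satisfying F′(x) = λ̃ x^{c−2κ} f(x) on (0,l]. Assume the flux boundary condition lim_{x→0⁺} xᶜ f(x) f′(x) = 0 at the tip, and at x = l either the Dirichlet condition f(l) = 0 or the Neumann condition f′(l) = 0 holds. Then f is identically zero. -/
/-!
Multiply the equation `(xᶜ f′)′ = λ̃ x^{c-2κ} f` by `f`: the energy `E = xᶜ f′ f` has derivative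
`E′ = λ̃ x^{c-2κ} f² + xᶜ f′² ≥ 0`, so `E` is monotone on `(0, l]`. It tends to `0` at the tip and
vanishes at `l` under either boundary condition, hence `E ≡ 0`. Then `E′ ≡ 0` in the interior, which
forces `f = 0` there, and by continuity also at `l`.
-/

open Set Filter Topology

theorem MonotoneOn.eqOn_zero_of_tendsto_nhdsGT {a b : ℝ} {g : ℝ → ℝ}
    (hg : MonotoneOn g (Ioc a b)) (ha : Tendsto g (𝓝[>] a) (𝓝 0)) (hb : g b = 0) :
    EqOn g 0 (Ioc a b) := by
  intro x hx
  have hab : b ∈ Ioc a b := ⟨hx.1.trans_le hx.2, le_rfl⟩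
  have upper : g x ≤ 0 := hb ▸ hg hx hab hx.2
  have lower : 0 ≤ g x := by
    refine le_of_tendsto ha ?_
    filter_upwards [Ioo_mem_nhdsGT hx.1] with y hy
    exact hg ⟨hy.1, hy.2.le.trans hx.2⟩ hx hy.2.le
  exact le_antisymm upper lower

section SturmLiouville

variable {a b : ℝ} {f f' p q : ℝ → ℝ}

theorem hasDerivWithinAt_flux_mul_self {s : Set ℝ} {x : ℝ}
    (hf : HasDerivWithinAt f (f' x) s x)
    (hflux : HasDerivWithinAt (fun t => p t * f' t) (q x * f x) s x) :
    HasDerivWithinAt (fun t => p t * f' t * f t) (q x * f x ^ 2 + p x * f' x ^ 2) s x :=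
  (hflux.mul hf).congr_deriv (by ring)

theorem eq_zero_of_weighted_sum_sq_eq_zero {x y u v : ℝ} (hu : 0 < u) (hv : 0 ≤ v)
    (h : u * x ^ 2 + v * y ^ 2 = 0) : x = 0 := by
  have hx : u * x ^ 2 = 0 := by nlinarith [mul_nonneg hv (sq_nonneg y), sq_nonneg x]
  simpa [hu.ne'] using hx

variable (hderiv : ∀ x ∈ Ioc a b, HasDerivWithinAt f (f' x) (Ioc a b) x)
  (hflux : ∀ x ∈ Ioc a b, HasDerivWithinAt (fun t => p t * f' t) (q x * f x) (Ioc a b) x)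
  (hp : ∀ x ∈ Ioo a b, 0 ≤ p x) (hq : ∀ x ∈ Ioo a b, 0 < q x)
include hderiv hflux hp hq

theorem monotoneOn_flux_mul_self : MonotoneOn (fun t => p t * f' t * f t) (Ioc a b) := by
  have henergy x (hx : x ∈ Ioc a b) := hasDerivWithinAt_flux_mul_self (hderiv x hx) (hflux x hx)
  refine monotoneOn_of_hasDerivWithinAt_nonneg (f' := fun x => q x * f x ^ 2 + p x * f' x ^ 2)
    (convex_Ioc a b)
    (fun x hx => (henergy x hx).continuousWithinAt) ?_ ?_ <;> rw [interior_Ioc] <;> intro x hx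
  · exact (henergy x (Ioo_subset_Ioc_self hx)).mono Ioo_subset_Ioc_self
  · have := hq x hx
    have := hp x hx
    positivity

theorem eqOn_zero_of_sturmLiouville
    (htip : Tendsto (fun x => p x * f x * f' x) (𝓝[>] a) (𝓝 0)) (hbc : f b = 0 ∨ f' b = 0) :
    EqOn f 0 (Ioc a b) := by
  have henergy_zero : EqOn (fun t => p t * f' t * f t) 0 (Ioc a b) :=
    (monotoneOn_flux_mul_self hderiv hflux hp hq).eqOn_zero_of_tendsto_nhdsGT
      (htip.congr fun x => by ring) (by rcases hbc with h | h <;> simp [h])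
  have hinterior : EqOn f 0 (Ioo a b) := by
    intro x hx
    have hx' : x ∈ Ioc a b := Ioo_subset_Ioc_self hx
    have hnhds : Ioc a b ∈ 𝓝 x := Ioc_mem_nhds hx.1 hx.2
    have hderiv_energy := (hasDerivWithinAt_flux_mul_self (hderiv x hx') (hflux x hx')).hasDerivAt
      hnhds
    have hderiv_zero : HasDerivAt (fun t => p t * f' t * f t) 0 x :=
      (hasDerivAt_const x (0 : ℝ)).congr_of_eventuallyEq
        (eventually_of_mem hnhds fun y hy => henergy_zero hy)
    exact eq_zero_of_weighted_sum_sq_eq_zero (hq x hx) (hp x hx)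
      (hderiv_energy.unique hderiv_zero)
  intro x hx
  refine hinterior.of_subset_closure (fun y hy => (hderiv y hy).continuousWithinAt)
    continuousOn_const Ioo_subset_Ioc_self ?_ hx
  rw [closure_Ioo (hx.1.trans_le hx.2).ne]
  exact Ioc_subset_Icc_self

end SturmLiouville

theorem SL_positive_eigenvalue_vanishing_general (l κ c lam : ℝ)
    (hlam : 0 < lam) (f f' : ℝ → ℝ)
    (hderiv : ∀ x ∈ Ioc (0 : ℝ) l, HasDerivWithinAt f (f' x) (Ioc (0 : ℝ) l) x)
    (hflux : ∀ x ∈ Ioc (0 : ℝ) l,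
      HasDerivWithinAt (fun t : ℝ => t ^ c * f' t)
        (lam * x ^ (c - 2 * κ) * f x) (Ioc (0 : ℝ) l) x)
    (htip : Tendsto (fun x : ℝ => x ^ c * f x * f' x) (nhdsWithin 0 (Ioi 0)) (nhds 0))
    (hbc : f l = 0 ∨ f' l = 0) :
    ∀ x ∈ Ioc (0 : ℝ) l, f x = 0 :=
  eqOn_zero_of_sturmLiouville (p := fun x => x ^ c) (q := fun x => lam * x ^ (c - 2 * κ))
    hderiv hflux (fun _ hx => Real.rpow_nonneg hx.1.le c)
    (fun _ hx => mul_pos hlam (Real.rpow_pos_of_pos hx.1 _)) htip hbc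

/-- A solution of the Sturm–Liouville equation `(xᶜ f′)′ = λ̃ x^{c-2κ} f` on `(0, l]`
with `λ̃ > 0`, vanishing flux `lim_{x→0⁺} xᶜ f f′ = 0` at the tip, and either Dirichlet
(`f(l) = 0`) or Neumann (`f′(l) = 0`) condition at `x = l`, is identically zero. -/
theorem SL_positive_eigenvalue_vanishing (l κ c lam : ℝ) (hl : 0 < l) (hκ : 1 < κ)
    (hlam : 0 < lam) (f f' : ℝ → ℝ)
    (hcont : ContinuousOn f (Ioc (0 : ℝ) l))
    (hderiv : ∀ x ∈ Ioc (0 : ℝ) l, HasDerivWithinAt f (f' x) (Ioc (0 : ℝ) l) x)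
    (hflux : ∀ x ∈ Ioc (0 : ℝ) l,
      HasDerivWithinAt (fun t : ℝ => t ^ c * f' t)
        (lam * x ^ (c - 2 * κ) * f x) (Ioc (0 : ℝ) l) x)
    (htip : Tendsto (fun x : ℝ => x ^ c * f x * f' x) (nhdsWithin 0 (Ioi 0)) (nhds 0))
    (hbc : f l = 0 ∨ f' l = 0) :
    ∀ x ∈ Ioc (0 : ℝ) l, f x = 0 :=
  SL_positive_eigenvalue_vanishing_general l κ c lam hlam f f' hderiv hflux htip hbc
end
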